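/- In the associative unital ℂ-algebra TL generated by elements {θ_k : k ∈ ℤ} subject to the relations θ_k² = 0, θ_k θ_{k±1} θ_k = θ_k, and θ_k θ_j = θ_j θ_k whenever |k−j| > 1: if I = (i₁,…,i_m) is a reduced sequence (i.e. θ_{i_m}⋯θ_{i_1} ≠ 0 and no shorter sequence yields the same element), then the maximal value max{i ∈ I} occurs exactly once in I. The same holds for the minimal value. -/

import Mathlib

/-!
Between two consecutive occurrences of the maximum `m` of a reduced word lies a subword `B` with
all letters `< m`. If `m - 1` does not occur in `B`, then `θ_m` commutes past `B` and `θ_m² = 0`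
kills the word; if it occurs once, `θ_m θ_B θ_m` collapses via `θ_m θ_{m-1} θ_m = θ_m` to a word of
length `|B| + 1`, contradicting minimality; if it occurs twice or more, `B` is itself reduced with
maximum `m - 1`, which contradicts induction on the length. The minimum is the maximum of the
word reflected by `k ↦ -k`, which swaps the two braid-type relations.
-/

namespace List

variable {α : Type*} [DecidableEq α] {a : α} {l : List α}

theorem exists_eq_append_cons_of_count_eq_one (h : l.count a = 1) :
    ∃ s t, l = s ++ a :: t ∧ a ∉ s ∧ a ∉ t := by
  obtain ⟨s, t, rfl⟩ := append_of_mem (count_pos_iff.mp (by omega : 0 < l.count a))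
  rw [count_append, count_cons_self] at h
  exact ⟨s, t, rfl, count_eq_zero.mp (by omega), count_eq_zero.mp (by omega)⟩

theorem exists_eq_append_cons_append_cons_of_two_le_count (h : 2 ≤ l.count a) :
    ∃ s u t, l = s ++ a :: u ++ a :: t ∧ a ∉ u := by
  obtain ⟨s, v, hs, rfl, -⟩ := exists_erase_eq (count_pos_iff.mp (by omega : 0 < l.count a))
  rw [count_append, count_eq_zero_of_not_mem hs, count_cons_self] at h
  obtain ⟨u, t, hu, rfl, -⟩ := exists_erase_eq (count_pos_iff.mp (by omega : 0 < v.count a))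
  exact ⟨s, u, t, by simp, hu⟩

end List

open List

section

variable {A : Type*} [Ring A] {θ : ℤ → A}

variable (θ) in
def IsReducedWord (I : List ℤ) : Prop :=
  (I.map θ).prod ≠ 0 ∧ ∀ J : List ℤ, (J.map θ).prod = (I.map θ).prod → I.length ≤ J.length

theorem IsReducedWord.of_infix {I J : List ℤ} (hI : IsReducedWord θ I) (hJ : J <:+: I) :
    IsReducedWord θ J := by
  obtain ⟨s, t, rfl⟩ := hJ
  have hprod : ∀ K : List ℤ, ((s ++ K ++ t).map θ).prod =
      (s.map θ).prod * (K.map θ).prod * (t.map θ).prod := by simp [mul_assoc]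
  refine ⟨fun h0 => hI.1 (by rw [hprod, h0]; simp), fun K hK => ?_⟩
  simpa using hI.2 (s ++ K ++ t) (by rw [hprod, hprod, hK])

theorem IsReducedWord.map_neg {I : List ℤ} (hI : IsReducedWord θ I) :
    IsReducedWord (fun k => θ (-k)) (I.map Neg.neg) := by
  have hprod : ∀ K : List ℤ, ((K.map Neg.neg).map θ).prod = (K.map fun k => θ (-k)).prod := by
    simp [Function.comp_def]
  have hprod_neg : ((I.map Neg.neg).map fun k => θ (-k)).prod = (I.map θ).prod := by
    simp [Function.comp_def]
  refine ⟨by rw [hprod_neg]; exact hI.1, fun J hJ => ?_⟩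
  rw [hprod_neg, ← hprod] at hJ
  simpa using hI.2 _ hJ

variable (h3 : ∀ k j, 1 < |k - j| → Commute (θ k) (θ j))
include h3

theorem commute_prod_of_forall_lt_sub_one {m : ℤ} {B : List ℤ} (hB : ∀ j ∈ B, j < m - 1) :
    Commute (θ m) (B.map θ).prod :=
  Commute.list_prod_right _ _ fun x hx => by
    obtain ⟨j, hj, rfl⟩ := mem_map.mp hx
    exact h3 m j (lt_abs.mpr (Or.inl (by linarith [hB j hj])))

theorem mul_prod_mul_eq_zero (h1 : ∀ k, θ k * θ k = 0) {m : ℤ} {B : List ℤ}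
    (hB : ∀ j ∈ B, j < m - 1) : θ m * (B.map θ).prod * θ m = 0 := by
  rw [(commute_prod_of_forall_lt_sub_one h3 hB).eq, mul_assoc, h1, mul_zero]

theorem mul_prod_mul_eq_prod (h2' : ∀ k, θ k * θ (k - 1) * θ k = θ k) {m : ℤ}
    {B₁ B₂ : List ℤ} (hB₁ : ∀ j ∈ B₁, j < m - 1) (hB₂ : ∀ j ∈ B₂, j < m - 1) :
    θ m * ((B₁ ++ (m - 1) :: B₂).map θ).prod * θ m = ((B₁ ++ m :: B₂).map θ).prod := by
  have c₁ := commute_prod_of_forall_lt_sub_one h3 hB₁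
  have c₂ := commute_prod_of_forall_lt_sub_one h3 hB₂
  simp only [map_append, map_cons, prod_append, prod_cons]
  calc θ m * ((B₁.map θ).prod * (θ (m - 1) * (B₂.map θ).prod)) * θ m
      = (B₁.map θ).prod * (θ m * θ (m - 1) * θ m) * (B₂.map θ).prod := by
        simp only [← mul_assoc, c₁.eq]
        simp only [mul_assoc, c₂.eq]
    _ = (B₁.map θ).prod * (θ m * (B₂.map θ).prod) := by rw [h2', mul_assoc]

theorem IsReducedWord.count_eq_one_of_forall_le (h1 : ∀ k, θ k * θ k = 0)
    (h2' : ∀ k, θ k * θ (k - 1) * θ k = θ k) {I : List ℤ} (hI : IsReducedWord θ I) {m : ℤ}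
    (hm : m ∈ I) (hmax : ∀ i ∈ I, i ≤ m) : I.count m = 1 := by
  induction hn : I.length using Nat.strong_induction_on generalizing I m with
  | _ n ih =>
  by_contra hne
  have htwo : 2 ≤ I.count m := by have := count_pos_iff.mpr hm; omega
  obtain ⟨P, B, S, rfl, hmB⟩ := exists_eq_append_cons_append_cons_of_two_le_count htwo
  have hBlt : ∀ j ∈ B, j < m := fun j hj =>
    lt_of_le_of_ne (hmax j (by simp [hj])) (ne_of_mem_of_not_mem hj hmB)
  have hprod : ∀ K : List ℤ, ((P ++ m :: K ++ m :: S).map θ).prod =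
      (P.map θ).prod * (θ m * (K.map θ).prod * θ m) * (S.map θ).prod := by
    simp [mul_assoc]
  have hlt : ∀ {C : List ℤ}, C ⊆ B → m - 1 ∉ C → ∀ j ∈ C, j < m - 1 := fun hCB hC j hj =>
    lt_of_le_of_ne (by linarith [hBlt j (hCB hj)]) (ne_of_mem_of_not_mem hj hC)
  obtain hcount₀ | hcount₁ | hcount₂ :
      B.count (m - 1) = 0 ∨ B.count (m - 1) = 1 ∨ 2 ≤ B.count (m - 1) := by
    omega
  · have hB := hlt (Subset.refl B) (count_eq_zero.mp hcount₀)
    exact hI.1 (by rw [hprod, mul_prod_mul_eq_zero h3 h1 hB]; simp)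
  · obtain ⟨B₁, B₂, rfl, h₁, h₂⟩ := exists_eq_append_cons_of_count_eq_one hcount₁
    have hlen := hI.2 (P ++ (B₁ ++ m :: B₂) ++ S) (by
      rw [hprod, mul_prod_mul_eq_prod h3 h2' (hlt (by simp) h₁) (hlt (by simp) h₂)]
      simp [mul_assoc])
    simp at hlen
  · have hBred : IsReducedWord θ B := hI.of_infix ⟨P ++ [m], m :: S, by simp⟩
    have := ih B.length (by simp at hn; omega) hBred
      (count_pos_iff.mp (by omega : 0 < B.count (m - 1))) (fun j hj => by linarith [hBlt j hj]) rfl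
    omega

end

theorem stmt14_general (A : Type*) [Ring A] (θ : ℤ → A)
    (h1 : ∀ k, θ k * θ k = 0)
    (h2 : ∀ k, θ k * θ (k + 1) * θ k = θ k)
    (h2' : ∀ k, θ k * θ (k - 1) * θ k = θ k)
    (h3 : ∀ k j, 1 < |k - j| → θ k * θ j = θ j * θ k)
    (I : List ℤ)
    (hnz : (I.map θ).prod ≠ 0)
    (hred : ∀ J : List ℤ, (J.map θ).prod = (I.map θ).prod → I.length ≤ J.length) :
    (∀ mx ∈ I, (∀ i ∈ I, i ≤ mx) → I.count mx = 1) ∧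
    (∀ mn ∈ I, (∀ i ∈ I, mn ≤ i) → I.count mn = 1) := by
  have hI : IsReducedWord θ I := ⟨hnz, hred⟩
  refine ⟨fun mx hmx hmax => hI.count_eq_one_of_forall_le h3 h1 h2' hmx hmax,
    fun mn hmn hmin => ?_⟩
  have h3neg : ∀ k j, 1 < |k - j| → Commute (θ (-k)) (θ (-j)) := fun k j hkj =>
    h3 _ _ (by rwa [neg_sub_neg, abs_sub_comm])
  have h2neg : ∀ k, θ (-k) * θ (-(k - 1)) * θ (-k) = θ (-k) := fun k => by
    simpa [neg_sub, sub_eq_neg_add] using h2 (-k)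
  have hcount := hI.map_neg.count_eq_one_of_forall_le h3neg (fun k => h1 (-k)) h2neg
    (mem_map_of_mem hmn) (forall_mem_map.mpr fun i hi => neg_le_neg (hmin i hi))
  rwa [count_map_of_injective _ _ neg_injective] at hcount

/-- in the Temperley–Lieb algebra `TL_∞(√−1)` (any ℂ-algebra with
elements `θ_k`, `k ∈ ℤ`, satisfying `θ_k² = 0`, `θ_k θ_{k±1} θ_k = θ_k`, and
`θ_k θ_j = θ_j θ_k` for `|k−j| > 1`), a reduced sequence `I` (with `θ_I ≠ 0` and
no shorter sequence giving the same element) contains its maximal value exactly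
once, and likewise its minimal value. -/
theorem stmt14 (A : Type*) [Ring A] [Algebra ℂ A] (θ : ℤ → A)
    (h1 : ∀ k, θ k * θ k = 0)
    (h2 : ∀ k, θ k * θ (k + 1) * θ k = θ k)
    (h2' : ∀ k, θ k * θ (k - 1) * θ k = θ k)
    (h3 : ∀ k j, 1 < |k - j| → θ k * θ j = θ j * θ k)
    (I : List ℤ)
    (hnz : (I.map θ).prod ≠ 0)
    (hred : ∀ J : List ℤ, (J.map θ).prod = (I.map θ).prod → I.length ≤ J.length) :
    (∀ mx ∈ I, (∀ i ∈ I, i ≤ mx) → I.count mx = 1) ∧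
    (∀ mn ∈ I, (∀ i ∈ I, mn ≤ i) → I.count mn = 1) :=
  stmt14_general A θ h1 h2 h2' h3 I hnz hred
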